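/- arXiv:1311.4665 — 5 statements merged into one kernel-verified Lean document; each statement's English description precedes it below -/
import Mathlib

section
/- For any finite nonempty set S of sources in a connected weighted graph G, any vertex q, and any vertex p maximizing the ratio d(p,S,q)/d(p,q) over all vertices p ≠ q (where d(p,S,q) = min over s in S of d(p,s)+d(s,q)), there exists a vertex p' adjacent to q in G achieving the same maximum ratio. Consequently, the stretch factor max over pairs p≠q of d(p,S,q)/d(p,q) is realized by a pair of adjacent vertices. -/
open SimpleGraph Finset

noncomputable def walkLen {V : Type*} (G : SimpleGraph V) (ℓ : V → V → ℝ) {p q : V}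
    (w : G.Walk p q) : ℝ :=
  (w.darts.map fun d => ℓ d.toProd.1 d.toProd.2).sum

noncomputable def gdist {V : Type*} (G : SimpleGraph V) (ℓ : V → V → ℝ) (p q : V) : ℝ :=
  sInf {x | ∃ w : G.Walk p q, walkLen G ℓ w = x}

noncomputable def dvia {V : Type*} (G : SimpleGraph V) (ℓ : V → V → ℝ) (S : Finset V)
    (hS : S.Nonempty) (p q : V) : ℝ :=
  S.inf' hS fun s => gdist G ℓ p s + gdist G ℓ s q

noncomputable def dnear {V : Type*} (G : SimpleGraph V) (ℓ : V → V → ℝ) (S : Finset V)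
    (hS : S.Nonempty) (p : V) : ℝ :=
  S.inf' hS fun s => gdist G ℓ p s

noncomputable def stretch {V : Type*} (G : SimpleGraph V) (ℓ : V → V → ℝ) (S : Finset V)
    (hS : S.Nonempty) : ℝ :=
  sSup {x | ∃ p q : V, p ≠ q ∧ x = dvia G ℓ S hS p q / gdist G ℓ p q}

noncomputable def farthest {V : Type*} (G : SimpleGraph V) (ℓ : V → V → ℝ) (S : Finset V)
    (hS : S.Nonempty) : ℝ :=
  sSup {x | ∃ p : V, x = dnear G ℓ S hS p}

section Aux

open SimpleGraph Finset

variable {V : Type*} {G : SimpleGraph V} {ℓ : V → V → ℝ}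

lemma darts_bypass_sublist [DecidableEq V] {u v : V} (w : G.Walk u v) :
    w.bypass.darts.Sublist w.darts := by
  induction w with
  | nil =>
    simp only [SimpleGraph.Walk.bypass]
    exact List.Sublist.refl _
  | @cons u c v ha p ih =>
    simp only [SimpleGraph.Walk.bypass]
    split_ifs with hs
    · have h1 : (p.bypass.dropUntil u hs).darts.Sublist p.bypass.darts := by
        conv_rhs => rw [← p.bypass.take_spec hs]
        rw [SimpleGraph.Walk.darts_append]
        exact List.sublist_append_right _ _
      rw [SimpleGraph.Walk.darts_cons]
      exact ((h1.trans ih).cons _)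
    · rw [SimpleGraph.Walk.darts_cons, SimpleGraph.Walk.darts_cons]
      exact ih.cons₂ _

lemma walkLen_nil {u : V} : walkLen G ℓ (SimpleGraph.Walk.nil : G.Walk u u) = 0 := rfl

lemma walkLen_cons {u c v : V} (ha : G.Adj u c) (p : G.Walk c v) :
    walkLen G ℓ (SimpleGraph.Walk.cons ha p) = ℓ u c + walkLen G ℓ p := by
  simp [walkLen]

lemma walkLen_append {u v w : V} (p : G.Walk u v) (q : G.Walk v w) :
    walkLen G ℓ (p.append q) = walkLen G ℓ p + walkLen G ℓ q := by
  simp [walkLen]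

variable (hpos : ∀ a b, G.Adj a b → 0 < ℓ a b)
include hpos

lemma walkLen_nonneg {u v : V} (w : G.Walk u v) : 0 ≤ walkLen G ℓ w := by
  apply List.sum_nonneg
  intro x hx
  obtain ⟨d, hd, rfl⟩ := List.mem_map.mp hx
  exact (hpos _ _ d.adj).le

lemma walkLen_bypass_le [DecidableEq V] {u v : V} (w : G.Walk u v) :
    walkLen G ℓ w.bypass ≤ walkLen G ℓ w := by
  apply List.Sublist.sum_le_sum (List.Sublist.map _ (darts_bypass_sublist w))
  intro x hx
  obtain ⟨d, hd, rfl⟩ := List.mem_map.mp hx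
  exact (hpos _ _ d.adj).le

lemma gdist_le_walkLen {u v : V} (w : G.Walk u v) :
    gdist G ℓ u v ≤ walkLen G ℓ w := by
  have hbdd : BddBelow {x | ∃ w' : G.Walk u v, walkLen G ℓ w' = x} := by
    refine ⟨0, ?_⟩
    rintro x ⟨w', rfl⟩
    exact walkLen_nonneg hpos w'
  exact csInf_le hbdd ⟨w, rfl⟩

lemma exists_walk_gdist (hconn : G.Connected) (u v : V) [Fintype V] :
    ∃ w : G.Walk u v, w.IsPath ∧ walkLen G ℓ w = gdist G ℓ u v := by
  classical
  obtain ⟨w₀⟩ := hconn u v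
  set T : Set ℝ := Set.range (fun P : G.Path u v => walkLen G ℓ P.val) with hT
  have hTne : T.Nonempty :=
    ⟨walkLen G ℓ w₀.bypass, ⟨⟨w₀.bypass, w₀.bypass_isPath⟩, rfl⟩⟩
  have hTfin : T.Finite := Set.finite_range _
  obtain ⟨P, hP⟩ := hTne.csInf_mem hTfin
  have hP' : walkLen G ℓ P.val = sInf T := hP
  refine ⟨P.val, P.prop, le_antisymm ?_ (gdist_le_walkLen hpos P.val)⟩
  rw [hP']
  unfold gdist
  refine le_csInf ⟨walkLen G ℓ w₀, w₀, rfl⟩ ?_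
  rintro x ⟨w, rfl⟩
  calc sInf T ≤ walkLen G ℓ w.bypass :=
        csInf_le hTfin.bddBelow ⟨⟨w.bypass, w.bypass_isPath⟩, rfl⟩
    _ ≤ walkLen G ℓ w := walkLen_bypass_le hpos w

lemma gdist_pos [Fintype V] (hconn : G.Connected) {u v : V} (huv : u ≠ v) :
    0 < gdist G ℓ u v := by
  obtain ⟨w, hw, hlen⟩ := exists_walk_gdist hpos hconn u v
  rw [← hlen]
  cases w with
  | nil => exact absurd rfl huv
  | cons ha p =>
    rw [walkLen_cons]
    have h1 := walkLen_nonneg hpos p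
    have h2 := hpos _ _ ha
    linarith

lemma gdist_triangle [Fintype V] (hconn : G.Connected) (u m v : V) :
    gdist G ℓ u v ≤ gdist G ℓ u m + gdist G ℓ m v := by
  obtain ⟨w1, _, h1⟩ := exists_walk_gdist hpos hconn u m
  obtain ⟨w2, _, h2⟩ := exists_walk_gdist hpos hconn m v
  calc gdist G ℓ u v ≤ walkLen G ℓ (w1.append w2) := gdist_le_walkLen hpos _
    _ = gdist G ℓ u m + gdist G ℓ m v := by rw [walkLen_append, h1, h2]

lemma gdist_le_dvia [Fintype V] (hconn : G.Connected) (S : Finset V) (hS : S.Nonempty)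
    (u v : V) : gdist G ℓ u v ≤ dvia G ℓ S hS u v := by
  apply Finset.le_inf'
  intro s _
  exact gdist_triangle hpos hconn u s v

lemma dvia_triangle [Fintype V] (hconn : G.Connected) (S : Finset V) (hS : S.Nonempty)
    (u m v : V) : dvia G ℓ S hS u v ≤ gdist G ℓ u m + dvia G ℓ S hS m v := by
  obtain ⟨s, hs, hseq⟩ := Finset.exists_mem_eq_inf' hS (fun s => gdist G ℓ m s + gdist G ℓ s v)
  have h1 : dvia G ℓ S hS u v ≤ gdist G ℓ u s + gdist G ℓ s v :=
    Finset.inf'_le _ hs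
  have h2 : gdist G ℓ u s ≤ gdist G ℓ u m + gdist G ℓ m s :=
    gdist_triangle hpos hconn u m s
  have h3 : dvia G ℓ S hS m v = gdist G ℓ m s + gdist G ℓ s v := hseq
  linarith

end Aux

open SimpleGraph Finset in
/-- Key lemma: the ratio maximum at fixed target `q` is attained at a neighbor of `q`. -/
lemma key_neighbor {V : Type*} [Fintype V] {G : SimpleGraph V} (hconn : G.Connected)
    {ℓ : V → V → ℝ} (hpos : ∀ a b, G.Adj a b → 0 < ℓ a b)
    (S : Finset V) (hS : S.Nonempty) (q p : V) (hpq : p ≠ q)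
    (hmax : ∀ p', p' ≠ q →
      dvia G ℓ S hS p' q / gdist G ℓ p' q ≤ dvia G ℓ S hS p q / gdist G ℓ p q) :
    ∃ p', G.Adj p' q ∧
      dvia G ℓ S hS p' q / gdist G ℓ p' q = dvia G ℓ S hS p q / gdist G ℓ p q := by
  obtain ⟨w, hwpath, hwlen⟩ := exists_walk_gdist hpos hconn p q
  cases hrev : w.reverse with
  | nil =>
    exact absurd rfl hpq
  | @cons _ c _ ha w1 =>
    -- ha : G.Adj q c, w1 : G.Walk c p
    refine ⟨c, ha.symm, ?_⟩
    have hcq : c ≠ q := ha.ne'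
    have hweq : w = w1.reverse.append (SimpleGraph.Walk.cons ha.symm SimpleGraph.Walk.nil) := by
      have h := congrArg SimpleGraph.Walk.reverse hrev
      rw [SimpleGraph.Walk.reverse_reverse] at h
      rw [h, SimpleGraph.Walk.reverse_cons]
    set x := walkLen G ℓ w1.reverse with hx
    have hx0 : 0 ≤ x := walkLen_nonneg hpos _
    have hE : gdist G ℓ p q = x + ℓ c q := by
      rw [← hwlen, hweq, walkLen_append, walkLen_cons, walkLen_nil, ← hx]
      ring
    have hgpc : gdist G ℓ p c ≤ x := gdist_le_walkLen hpos _
    have hgcq : gdist G ℓ c q ≤ ℓ c q := by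
      calc gdist G ℓ c q ≤ walkLen G ℓ (SimpleGraph.Walk.cons ha.symm SimpleGraph.Walk.nil) :=
            gdist_le_walkLen hpos _
        _ = ℓ c q := by rw [walkLen_cons, walkLen_nil]; ring
    have hB : 0 < gdist G ℓ c q := gdist_pos hpos hconn hcq
    have hBA : gdist G ℓ c q ≤ dvia G ℓ S hS c q := gdist_le_dvia hpos hconn S hS c q
    have htri : dvia G ℓ S hS p q ≤ x + dvia G ℓ S hS c q := by
      have h := dvia_triangle hpos hconn S hS p c q
      linarith
    have hpqpos : 0 < gdist G ℓ p q := gdist_pos hpos hconn hpq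
    refine le_antisymm (hmax c hcq) ?_
    rw [div_le_div_iff₀ hpqpos hB]
    set A := dvia G ℓ S hS c q
    set B := gdist G ℓ c q
    set L := ℓ c q
    nlinarith [mul_nonneg hx0 (sub_nonneg.mpr hBA), mul_nonneg (hB.le.trans hBA)
      (sub_nonneg.mpr hgcq)]

/-- the maximum of the ratio d(p,S,q)/d(p,q) over p ≠ q (for fixed q) is
realized at a neighbor of q; consequently the stretch factor is realized by an adjacent pair. -/
theorem stmt_0 {V : Type*} [Fintype V] (G : SimpleGraph V) (hconn : G.Connected)
    (ℓ : V → V → ℝ) (hsymm : ∀ a b, ℓ a b = ℓ b a) (hpos : ∀ a b, G.Adj a b → 0 < ℓ a b)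
    (S : Finset V) (hS : S.Nonempty) (q p : V) (hpq : p ≠ q)
    (hmax : ∀ p', p' ≠ q →
      dvia G ℓ S hS p' q / gdist G ℓ p' q ≤ dvia G ℓ S hS p q / gdist G ℓ p q) :
    (∃ p', G.Adj p' q ∧
        dvia G ℓ S hS p' q / gdist G ℓ p' q = dvia G ℓ S hS p q / gdist G ℓ p q) ∧
    (∃ a b, G.Adj a b ∧ ∀ x y, x ≠ y →
        dvia G ℓ S hS x y / gdist G ℓ x y ≤ dvia G ℓ S hS a b / gdist G ℓ a b) := by
  constructor
  · exact key_neighbor hconn hpos S hS q p hpq hmax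
  · classical
    obtain ⟨⟨p₀, q₀⟩, hmem, hglob⟩ := Finset.exists_max_image
      (Finset.univ.filter (fun z : V × V => z.1 ≠ z.2))
      (fun z => dvia G ℓ S hS z.1 z.2 / gdist G ℓ z.1 z.2)
      ⟨(p, q), by simp [hpq]⟩
    simp only [Finset.mem_filter, Finset.mem_univ, true_and] at hmem
    have hglob' : ∀ x y : V, x ≠ y →
        dvia G ℓ S hS x y / gdist G ℓ x y ≤ dvia G ℓ S hS p₀ q₀ / gdist G ℓ p₀ q₀ := by
      intro x y hxy
      exact hglob (x, y) (by simp [hxy])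
    obtain ⟨p', hadj, heq⟩ := key_neighbor hconn hpos S hS q₀ p₀ hmem
      (fun p'' h => hglob' p'' q₀ h)
    exact ⟨p', q₀, hadj, fun x y hxy => (hglob' x y hxy).trans_eq heq.symm⟩
end

section
/- Let G be a finite connected weighted graph, S a set of sources, p,q distinct vertices, and let p̃ be the neighbor of p on a shortest path from p to q, with ℓ the length of edge p p̃. Then d(p̃,S,q)/d(p̃,q) ≥ d(p,S,q)/d(p,q) + (ℓ/d(p̃,q))·(d(p,S,q)/d(p,q) − 1). -/
open SimpleGraph Finset

lemma walkLen_nonneg_s1 {V : Type*} (G : SimpleGraph V) (ℓ : V → V → ℝ)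
    (hpos : ∀ a b, G.Adj a b → 0 < ℓ a b) {p q : V} (w : G.Walk p q) :
    0 ≤ walkLen G ℓ w := by
  apply List.sum_nonneg
  intro x hx
  simp only [List.mem_map] at hx
  obtain ⟨d, hd, rfl⟩ := hx
  exact le_of_lt (hpos _ _ d.adj)

lemma gdist_set_nonempty {V : Type*} (G : SimpleGraph V) (hconn : G.Connected)
    (ℓ : V → V → ℝ) (p q : V) :
    {x | ∃ w : G.Walk p q, walkLen G ℓ w = x}.Nonempty := by
  obtain ⟨w⟩ := hconn.preconnected p q
  exact ⟨walkLen G ℓ w, w, rfl⟩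

lemma gdist_set_bddBelow {V : Type*} (G : SimpleGraph V) (ℓ : V → V → ℝ)
    (hpos : ∀ a b, G.Adj a b → 0 < ℓ a b) (p q : V) :
    BddBelow {x | ∃ w : G.Walk p q, walkLen G ℓ w = x} := by
  refine ⟨0, ?_⟩
  rintro x ⟨w, rfl⟩
  exact walkLen_nonneg_s1 G ℓ hpos w

lemma gdist_le_walkLen_s1 {V : Type*} (G : SimpleGraph V) (ℓ : V → V → ℝ)
    (hpos : ∀ a b, G.Adj a b → 0 < ℓ a b) {p q : V} (w : G.Walk p q) :
    gdist G ℓ p q ≤ walkLen G ℓ w :=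
  csInf_le (gdist_set_bddBelow G ℓ hpos p q) ⟨w, rfl⟩

lemma gdist_cons_le {V : Type*} (G : SimpleGraph V) (hconn : G.Connected)
    (ℓ : V → V → ℝ) (hpos : ∀ a b, G.Adj a b → 0 < ℓ a b) {p pt : V}
    (hadj : G.Adj p pt) (s : V) :
    gdist G ℓ p s ≤ ℓ p pt + gdist G ℓ pt s := by
  have h : ℓ p pt + gdist G ℓ pt s =
      ℓ p pt + sInf {x | ∃ w : G.Walk pt s, walkLen G ℓ w = x} := rfl
  rw [h]
  rw [show ℓ p pt + sInf {x | ∃ w : G.Walk pt s, walkLen G ℓ w = x} =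
      sInf {x | ∃ w : G.Walk pt s, walkLen G ℓ w = x} + ℓ p pt from add_comm _ _,
    ← sub_le_iff_le_add]
  apply le_csInf (gdist_set_nonempty G hconn ℓ pt s)
  rintro x ⟨w, rfl⟩
  rw [sub_le_iff_le_add]
  have : walkLen G ℓ (SimpleGraph.Walk.cons hadj w) = ℓ p pt + walkLen G ℓ w := by
    simp [walkLen]
  calc gdist G ℓ p s ≤ walkLen G ℓ (SimpleGraph.Walk.cons hadj w) :=
        gdist_le_walkLen_s1 G ℓ hpos _
    _ = ℓ p pt + walkLen G ℓ w := this
    _ = walkLen G ℓ w + ℓ p pt := add_comm _ _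

lemma gdist_pos_s1 {V : Type*} [Fintype V] (G : SimpleGraph V) (hconn : G.Connected)
    (ℓ : V → V → ℝ) (hpos : ∀ a b, G.Adj a b → 0 < ℓ a b) {p0 pt0 : V}
    (hadj0 : G.Adj p0 pt0) {p q : V} (hpq : p ≠ q) :
    0 < gdist G ℓ p q := by
  classical
  set E : Finset (V × V) := Finset.univ.filter (fun ab => G.Adj ab.1 ab.2) with hE
  have hEne : E.Nonempty := ⟨(p0, pt0), by simp [hE, hadj0]⟩
  set ε : ℝ := E.inf' hEne (fun ab => ℓ ab.1 ab.2) with hε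
  have hεpos : 0 < ε := by
    rw [hε]
    apply Finset.lt_inf'_iff hEne |>.2
    rintro ⟨a, b⟩ hab
    simp only [hE, Finset.mem_filter] at hab
    exact hpos a b hab.2
  have hle : ε ≤ gdist G ℓ p q := by
    apply le_csInf (gdist_set_nonempty G hconn ℓ p q)
    rintro x ⟨w, rfl⟩
    cases w with
    | nil => exact absurd rfl hpq
    | cons h w' =>
      rename_i v
      have h1 : walkLen G ℓ (SimpleGraph.Walk.cons h w') = ℓ p v + walkLen G ℓ w' := by
        simp [walkLen]
      rw [h1]
      have h2 : ε ≤ ℓ p v := by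
        rw [hε]
        exact Finset.inf'_le (fun ab => ℓ ab.1 ab.2)
          (by simp [hE, h] : ((p, v) : V × V) ∈ E)
      linarith [walkLen_nonneg_s1 G ℓ hpos w']
  linarith

/-- one-step inequality along a shortest path. -/
theorem stmt_1 {V : Type*} [Fintype V] (G : SimpleGraph V) (hconn : G.Connected)
    (ℓ : V → V → ℝ) (hsymm : ∀ a b, ℓ a b = ℓ b a) (hpos : ∀ a b, G.Adj a b → 0 < ℓ a b)
    (S : Finset V) (hS : S.Nonempty) (p q pt : V) (hpq : p ≠ q) (hptq : pt ≠ q)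
    (hadj : G.Adj p pt) (hshort : gdist G ℓ p q = ℓ p pt + gdist G ℓ pt q) :
    dvia G ℓ S hS p q / gdist G ℓ p q +
        (ℓ p pt / gdist G ℓ pt q) * (dvia G ℓ S hS p q / gdist G ℓ p q - 1) ≤
      dvia G ℓ S hS pt q / gdist G ℓ pt q := by
  have hD' : 0 < gdist G ℓ pt q := gdist_pos_s1 G hconn ℓ hpos hadj hptq
  have hℓ : 0 < ℓ p pt := hpos p pt hadj
  have hD : 0 < gdist G ℓ p q := by rw [hshort]; linarith
  -- key inequality: dvia p q ≤ ℓ p pt + dvia pt q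
  have key : dvia G ℓ S hS p q ≤ ℓ p pt + dvia G ℓ S hS pt q := by
    obtain ⟨s, hs, hseq⟩ := Finset.exists_mem_eq_inf' hS
      (fun s => gdist G ℓ pt s + gdist G ℓ s q)
    have h1 : dvia G ℓ S hS p q ≤ gdist G ℓ p s + gdist G ℓ s q :=
      Finset.inf'_le _ hs
    have h2 : gdist G ℓ p s ≤ ℓ p pt + gdist G ℓ pt s :=
      gdist_cons_le G hconn ℓ hpos hadj s
    have h3 : dvia G ℓ S hS pt q = gdist G ℓ pt s + gdist G ℓ s q := hseq
    linarith
  set A := dvia G ℓ S hS p q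
  set B := dvia G ℓ S hS pt q
  set D' := gdist G ℓ pt q
  rw [hshort]
  have h1 : A / (ℓ p pt + D') + ℓ p pt / D' * (A / (ℓ p pt + D') - 1) =
      (A - ℓ p pt) / D' := by
    field_simp
    ring
  rw [h1]
  gcongr
  linarith
end

section
/- Let G = (V,E) be a finite simple graph and let G_r be the graph obtained from G by subdividing each edge e ∈ E with an even number 2k_e of new (auxiliary) vertices, and let m = Σ_{e∈E} k_e. Then G has a vertex cover of size k if and only if G_r has a vertex cover of size k + m. -/
open SimpleGraph Finset

/-- A set of vertices covering every edge of a graph. -/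
def IsVertexCover {W : Type*} (G : SimpleGraph W) (C : Finset W) : Prop :=
  ∀ u v, G.Adj u v → u ∈ C ∨ v ∈ C

/-- The relation generating the subdivision of the graph with oriented edge set `D`,
in which the edge `e ∈ D` is subdivided by the `2 * k e` internal vertices
`(e, 0), …, (e, 2 * k e - 1)` (for `k e = 0` the edge is kept as is). -/
def subdivRel {V : Type*} (D : Finset (V × V)) (k : V × V → ℕ) :
    (V ⊕ ((V × V) × ℕ)) → (V ⊕ ((V × V) × ℕ)) → Prop
  | Sum.inl u, Sum.inl v => (u, v) ∈ D ∧ k (u, v) = 0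
  | Sum.inl u, Sum.inr (e, i) =>
      e ∈ D ∧ i < 2 * k e ∧ ((u = e.1 ∧ i = 0) ∨ (u = e.2 ∧ i + 1 = 2 * k e))
  | Sum.inr (e, i), Sum.inr (f, j) => e = f ∧ e ∈ D ∧ j = i + 1 ∧ j < 2 * k e
  | Sum.inr _, Sum.inl _ => False

/-- The subdivision graph `G_r`: every oriented edge `e ∈ D` is replaced by a path
through `2 * k e` new internal vertices. -/
def subdivGraph {V : Type*} (D : Finset (V × V)) (k : V × V → ℕ) :
    SimpleGraph (V ⊕ ((V × V) × ℕ)) :=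
  SimpleGraph.fromRel (subdivRel D k)

/-!
A vertex cover of a path with `2t` internal vertices uses at least `t` of them, and at least
`t + 1` if it contains neither endpoint; conversely `t` internal vertices at alternating positions
suffice once one endpoint is covered. So a cover `C` of `G` lifts to a cover of `G_r` by adding,
on the path of each edge, every other internal vertex, starting next to an endpoint outside `C`;
and a cover of `G_r` gives a cover of `G` by keeping its original vertices and, for each edge with
no endpoint kept, adding one endpoint, which is paid for by the extra internal vertex on its path.
-/

lemma le_card_filter_range_of_path_cover {P : ℕ → Prop} [DecidablePred P] {t : ℕ}
    (hP : ∀ i, i + 1 < 2 * t → P i ∨ P (i + 1)) : t ≤ #{i ∈ range (2 * t) | P i} := by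
  simpa using card_le_card_of_surjOn (s := {i ∈ range (2 * t) | P i}) (t := range t)
    (· / 2) fun j hj => by
      simp only [coe_range, Set.mem_Iio] at hj
      rcases hP (2 * j) (by omega) with h | h
      · exact ⟨2 * j, by simp [h]; omega, by dsimp only; omega⟩
      · exact ⟨2 * j + 1, by simp [h]; omega, by dsimp only; omega⟩

lemma succ_le_card_filter_range_of_path_cover {P : ℕ → Prop} [DecidablePred P] {t : ℕ}
    (ht : 0 < t) (hfirst : P 0) (hlast : P (2 * t - 1))
    (hP : ∀ i, i + 1 < 2 * t → P i ∨ P (i + 1)) : t + 1 ≤ #{i ∈ range (2 * t) | P i} := by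
  simpa using card_le_card_of_surjOn (s := {i ∈ range (2 * t) | P i}) (t := range (t + 1))
    (fun i => (i + 1) / 2) fun j hj => by
      simp only [coe_range, Set.mem_Iio] at hj
      rcases Nat.eq_zero_or_pos j with rfl | hj0
      · exact ⟨0, by simp [hfirst]; omega, rfl⟩
      rcases Nat.lt_or_ge j t with hjt | hjt
      · rcases hP (2 * j - 1) (by omega) with h | h
        · exact ⟨2 * j - 1, by simp [h]; omega, by dsimp only; omega⟩
        · exact ⟨2 * j - 1 + 1, by simp [h]; omega, by dsimp only; omega⟩
      · exact ⟨2 * t - 1, by simp [hlast]; omega, by dsimp only; omega⟩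

lemma sum_card_filter_mk_mem_le {α β : Type*} [DecidableEq α] [DecidableEq β]
    (R : Finset (α × β)) (D : Finset α) (T : α → Finset β) :
    ∑ a ∈ D, #{b ∈ T a | (a, b) ∈ R} ≤ #R := by
  rw [← card_sigma]
  refine card_le_card_of_injOn (fun x => (x.1, x.2)) (fun x hx => ?_) ?_
  · simp only [coe_sigma, Set.mem_sigma_iff, mem_coe, mem_filter] at hx
    exact hx.2.2
  · rintro ⟨a, b⟩ - ⟨a', b'⟩ - h
    obtain ⟨rfl, rfl⟩ := Prod.mk.inj h
    rfl

lemma isVertexCover_iff_forall_mem {V : Type*} {G : SimpleGraph V} {D : Finset (V × V)}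
    (hD : ∀ u v, G.Adj u v ↔ ((u, v) ∈ D ∨ (v, u) ∈ D)) {C : Finset V} :
    _root_.IsVertexCover G C ↔ ∀ e ∈ D, e.1 ∈ C ∨ e.2 ∈ C := by
  refine ⟨fun hC e he => hC _ _ ((hD _ _).2 (.inl he)), fun hC u v huv => ?_⟩
  rcases (hD u v).1 huv with h | h
  · exact hC _ h
  · exact (hC _ h).symm

lemma isVertexCover_fromRel {W : Type*} {r : W → W → Prop} {C : Finset W}
    (hC : ∀ a b, r a b → a ∈ C ∨ b ∈ C) : _root_.IsVertexCover (fromRel r) C := by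
  rintro a b ⟨-, h | h⟩
  · exact hC a b h
  · exact (hC b a h).symm

section Subdivision

variable {V : Type*} [DecidableEq V] {D : Finset (V × V)} {k : V × V → ℕ}

/-- On the path of `e`, the internal vertices at odd positions if `e.1 ∈ C` and at even
positions otherwise. -/
def alternatingSubdivCover (C : Finset V) (D : Finset (V × V)) (k : V × V → ℕ) :
    Finset (V ⊕ ((V × V) × ℕ)) :=
  C.disjSum <| D.biUnion fun e =>
    (range (k e)).image fun j => (e, 2 * j + if e.1 ∈ C then 1 else 0)

lemma card_alternatingSubdivCover_le (C : Finset V) (D : Finset (V × V)) (k : V × V → ℕ) :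
    #(alternatingSubdivCover C D k) ≤ #C + ∑ e ∈ D, k e := by
  rw [alternatingSubdivCover, card_disjSum, add_le_add_iff_left]
  refine card_biUnion_le.trans (sum_le_sum fun e _ => ?_)
  exact card_image_le.trans (card_range _).le

lemma inr_mem_alternatingSubdivCover {C : Finset V} {e : V × V} {i : ℕ} (he : e ∈ D)
    (hi : i < 2 * k e) (hparity : i % 2 = 1 ↔ e.1 ∈ C) :
    .inr (e, i) ∈ alternatingSubdivCover C D k := by
  simp only [alternatingSubdivCover, inr_mem_disjSum, mem_biUnion, mem_image, mem_range,
    Prod.mk.injEq]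
  refine ⟨e, he, i / 2, by omega, rfl, ?_⟩
  split_ifs with h <;> simp only [h, iff_true, iff_false] at hparity <;> omega

lemma isVertexCover_alternatingSubdivCover {C : Finset V}
    (hC : ∀ e ∈ D, e.1 ∈ C ∨ e.2 ∈ C) :
    _root_.IsVertexCover (subdivGraph D k) (alternatingSubdivCover C D k) := by
  have hinl : ∀ {v}, v ∈ C → .inl v ∈ alternatingSubdivCover C D k := inl_mem_disjSum.2
  refine isVertexCover_fromRel ?_
  rintro (u | ⟨e, i⟩) (v | ⟨f, j⟩) h
  · exact (hC _ h.1).imp hinl hinl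
  · obtain ⟨hf, hj, ⟨rfl, rfl⟩ | ⟨rfl, hlast⟩⟩ := h
    · by_cases h1 : f.1 ∈ C
      · exact .inl (hinl h1)
      · exact .inr (inr_mem_alternatingSubdivCover hf hj (by simp [h1]))
    · by_cases h1 : f.1 ∈ C
      · exact .inr (inr_mem_alternatingSubdivCover hf hj (by simp [h1]; omega))
      · exact .inl (hinl ((hC _ hf).resolve_left h1))
  · exact h.elim
  · obtain ⟨rfl, he, rfl, hj⟩ := h
    by_cases hparity : i % 2 = 1 ↔ e.1 ∈ C
    · exact .inl (inr_mem_alternatingSubdivCover he (by omega) hparity)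
    · refine .inr (inr_mem_alternatingSubdivCover he hj ?_)
      by_cases h1 : e.1 ∈ C <;> simp only [h1, iff_true, iff_false] at hparity ⊢ <;> omega

end Subdivision

section SubdivisionCover

variable {V : Type*} {D : Finset (V × V)} {k : V × V → ℕ} {C : Finset (V ⊕ ((V × V) × ℕ))}
  {e : V × V}

lemma IsVertexCover.subdiv_path (hC : _root_.IsVertexCover (subdivGraph D k) C)
    (he : e ∈ D) :
    ∀ i, i + 1 < 2 * k e → (e, i) ∈ C.toRight ∨ (e, i + 1) ∈ C.toRight := fun i hi => by
  simpa using hC (.inr (e, i)) (.inr (e, i + 1))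
    ((fromRel_adj ..).2 ⟨by simp, .inl ⟨rfl, he, rfl, hi⟩⟩)

variable [DecidableEq V]

lemma IsVertexCover.subdiv_le_card (hC : _root_.IsVertexCover (subdivGraph D k) C)
    (he : e ∈ D) :
    k e ≤ #{i ∈ range (2 * k e) | (e, i) ∈ C.toRight} :=
  le_card_filter_range_of_path_cover (hC.subdiv_path he)

lemma IsVertexCover.subdiv_succ_le_card (hC : _root_.IsVertexCover (subdivGraph D k) C)
    (he : e ∈ D) (hne : e.1 ≠ e.2) (h1 : e.1 ∉ C.toLeft) (h2 : e.2 ∉ C.toLeft) :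
    k e + 1 ≤ #{i ∈ range (2 * k e) | (e, i) ∈ C.toRight} := by
  rw [mem_toLeft] at h1 h2
  have hk : 0 < k e := Nat.pos_of_ne_zero fun hk => by
    have hadj : (subdivGraph D k).Adj (.inl e.1) (.inl e.2) :=
      (fromRel_adj ..).2 ⟨by simpa using hne, .inl ⟨he, hk⟩⟩
    exact (hC _ _ hadj).elim h1 h2
  have hfirst : (e, 0) ∈ C.toRight := by
    have hadj : (subdivGraph D k).Adj (.inl e.1) (.inr (e, 0)) :=
      (fromRel_adj ..).2 ⟨by simp, .inl ⟨he, by omega, .inl ⟨rfl, rfl⟩⟩⟩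
    simpa [h1] using hC _ _ hadj
  have hlast : (e, 2 * k e - 1) ∈ C.toRight := by
    have hadj : (subdivGraph D k).Adj (.inl e.2) (.inr (e, 2 * k e - 1)) :=
      (fromRel_adj ..).2 ⟨by simp, .inl ⟨he, by omega, .inr ⟨rfl, by omega⟩⟩⟩
    simpa [h2] using hC _ _ hadj
  exact succ_le_card_filter_range_of_path_cover hk hfirst hlast (hC.subdiv_path he)

lemma IsVertexCover.exists_card_add_sum_le (hC : _root_.IsVertexCover (subdivGraph D k) C)
    (hD1 : ∀ p ∈ D, p.1 ≠ p.2) :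
    ∃ C₀ : Finset V, (∀ e ∈ D, e.1 ∈ C₀ ∨ e.2 ∈ C₀) ∧ #C₀ + ∑ e ∈ D, k e ≤ #C := by
  set bad := {e ∈ D | e.1 ∉ C.toLeft ∧ e.2 ∉ C.toLeft}
  refine ⟨C.toLeft ∪ bad.image Prod.fst, fun e he => ?_, ?_⟩
  · by_cases hbad : e ∈ bad
    · exact .inl (mem_union_right _ (mem_image_of_mem _ hbad))
    · simp only [bad, mem_filter, he, true_and, not_and_or, not_not] at hbad
      exact hbad.imp (mem_union_left _) (mem_union_left _)
  have hpaths : #bad + ∑ e ∈ D, k e ≤ #C.toRight := calc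
    #bad + ∑ e ∈ D, k e
        = ∑ e ∈ D, (k e + if e.1 ∉ C.toLeft ∧ e.2 ∉ C.toLeft then 1 else 0) := by
      rw [sum_add_distrib, card_filter, add_comm]
    _ ≤ ∑ e ∈ D, #{i ∈ range (2 * k e) | (e, i) ∈ C.toRight} := sum_le_sum fun e he => by
      split_ifs with hbad
      · obtain ⟨h1, h2⟩ := hbad
        exact hC.subdiv_succ_le_card he (hD1 e he) h1 h2
      · exact hC.subdiv_le_card he
    _ ≤ #C.toRight := sum_card_filter_mk_mem_le _ _ _
  have hunion := card_union_le C.toLeft (bad.image Prod.fst)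
  have himage : #(bad.image Prod.fst) ≤ #bad := card_image_le
  have hsplit := card_toLeft_add_card_toRight (u := C)
  omega

end SubdivisionCover

theorem stmt_10_general {V : Type*} [DecidableEq V] (G : SimpleGraph V)
    (D : Finset (V × V))
    (hD : ∀ u v, G.Adj u v ↔ ((u, v) ∈ D ∨ (v, u) ∈ D))
    (hD1 : ∀ p ∈ D, p.1 ≠ p.2)
    (k : V × V → ℕ) (m : ℕ) (hm : m = ∑ p ∈ D, k p) (kk : ℕ) :
    (∃ C : Finset V, _root_.IsVertexCover G C ∧ C.card ≤ kk) ↔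
      (∃ C : Finset (V ⊕ ((V × V) × ℕ)),
        _root_.IsVertexCover (subdivGraph D k) C ∧ C.card ≤ kk + m) := by
  subst hm
  constructor
  · rintro ⟨C, hC, hcard⟩
    refine ⟨alternatingSubdivCover C D k,
      isVertexCover_alternatingSubdivCover ((isVertexCover_iff_forall_mem hD).1 hC), ?_⟩
    have := card_alternatingSubdivCover_le C D k
    omega
  · rintro ⟨C, hC, hcard⟩
    obtain ⟨C₀, hC₀, hle⟩ := hC.exists_card_add_sum_le hD1
    exact ⟨C₀, (isVertexCover_iff_forall_mem hD).2 hC₀, by omega⟩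

/-- G has a vertex cover of size k iff its subdivision G_r (each edge
subdivided by an even number `2 * k e` of auxiliary vertices) has a vertex cover of size
`k + m`, where `m = Σ_e k e`. -/
theorem stmt_10 {V : Type*} [Fintype V] [DecidableEq V] (G : SimpleGraph V)
    (D : Finset (V × V))
    (hD : ∀ u v, G.Adj u v ↔ ((u, v) ∈ D ∨ (v, u) ∈ D))
    (hD1 : ∀ p ∈ D, p.1 ≠ p.2) (hD2 : ∀ p ∈ D, (p.2, p.1) ∉ D)
    (k : V × V → ℕ) (m : ℕ) (hm : m = ∑ p ∈ D, k p) (kk : ℕ) :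
    (∃ C : Finset V, _root_.IsVertexCover G C ∧ C.card ≤ kk) ↔
      (∃ C : Finset (V ⊕ ((V × V) × ℕ)),
        _root_.IsVertexCover (subdivGraph D k) C ∧ C.card ≤ kk + m) :=
  stmt_10_general G D hD hD1 k m hm kk
end

section
/- If C is a vertex cover of the subdivision G_r (each edge e of G subdivided by 2k_e vertices) of size k+m that contains at least one endpoint of the subdividing path of every edge e of G, then the set of original (regular) vertices of G contained in C is a vertex cover of G of size at most k. -/
open SimpleGraph Finset

/-- if C is a vertex cover of the subdivision G_r of size k+m containing at
least one endpoint of the subdividing path of every edge of G, then the set of regular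
(original) vertices in C is a vertex cover of G of size at most k. -/
theorem stmt_12 {V : Type*} [Fintype V] [DecidableEq V] (G : SimpleGraph V)
    (D : Finset (V × V))
    (hD : ∀ u v, G.Adj u v ↔ ((u, v) ∈ D ∨ (v, u) ∈ D))
    (hD1 : ∀ p ∈ D, p.1 ≠ p.2) (hD2 : ∀ p ∈ D, (p.2, p.1) ∉ D)
    (k : V × V → ℕ) (m kk : ℕ) (hm : m = ∑ p ∈ D, k p)
    (C : Finset (V ⊕ ((V × V) × ℕ)))
    (hC : _root_.IsVertexCover (subdivGraph D k) C)
    (hcard : C.card = kk + m)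
    (hend : ∀ p ∈ D, Sum.inl p.1 ∈ C ∨ Sum.inl p.2 ∈ C) :
    _root_.IsVertexCover G (C.preimage Sum.inl Sum.inl_injective.injOn) ∧
      (C.preimage Sum.inl Sum.inl_injective.injOn).card ≤ kk := by
  classical
  constructor
  · intro u v huv
    rcases (hD u v).1 huv with h | h
    · rcases hend _ h with h1 | h1
      · exact Or.inl (Finset.mem_preimage.mpr h1)
      · exact Or.inr (Finset.mem_preimage.mpr h1)
    · rcases hend _ h with h1 | h1
      · exact Or.inr (Finset.mem_preimage.mpr h1)
      · exact Or.inl (Finset.mem_preimage.mpr h1)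
  · set A := C.filter (fun x => x.isLeft) with hA
    set B := C.filter (fun x => ¬ x.isLeft) with hB
    have hAB : A.card + B.card = C.card :=
      Finset.card_filter_add_card_filter_not _
    have himg : (C.preimage Sum.inl Sum.inl_injective.injOn).image Sum.inl = A := by
      ext x
      simp only [Finset.mem_image, Finset.mem_preimage, hA, Finset.mem_filter]
      constructor
      · rintro ⟨a, ha, rfl⟩; exact ⟨ha, rfl⟩
      · rintro ⟨hx, hl⟩
        cases x with
        | inl a => exact ⟨a, hx, rfl⟩
        | inr b => simp at hl
    have hpre : (C.preimage Sum.inl Sum.inl_injective.injOn).card = A.card := by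
      rw [← himg, Finset.card_image_of_injective _ Sum.inl_injective]
    have hBm : m ≤ B.card := by
      have hcle := Finset.card_le_card_of_injOn
        (f := fun p : Sigma (fun _ : V × V => ℕ) =>
          if Sum.inr (p.1, 2 * p.2) ∈ C then (Sum.inr (p.1, 2 * p.2) : V ⊕ ((V × V) × ℕ))
          else Sum.inr (p.1, 2 * p.2 + 1))
        (s := D.sigma (fun e => Finset.range (k e))) (t := B) ?_ ?_
      · calc m = (D.sigma (fun e => Finset.range (k e))).card := by
              rw [Finset.card_sigma]; simp [hm]
          _ ≤ B.card := hcle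
      · rintro ⟨e, j⟩ hp
        simp only [Finset.mem_coe, Finset.mem_sigma, Finset.mem_range] at hp
        obtain ⟨he, hj⟩ := hp
        have hadj : (subdivGraph D k).Adj (Sum.inr (e, 2 * j)) (Sum.inr (e, 2 * j + 1)) := by
          rw [subdivGraph, SimpleGraph.fromRel_adj]
          refine ⟨by simp, Or.inl ?_⟩
          exact ⟨rfl, he, rfl, by omega⟩
        have := hC _ _ hadj
        simp only [hB, Finset.mem_coe, Finset.mem_filter]
        rcases this with h1 | h1
        · rw [if_pos h1]; exact ⟨h1, by simp⟩
        · by_cases h2 : Sum.inr (e, 2 * j) ∈ C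
          · rw [if_pos h2]; exact ⟨h2, by simp⟩
          · rw [if_neg h2]; exact ⟨h1, by simp⟩
      · rintro ⟨e, j⟩ hp ⟨e', j'⟩ hp' heq
        simp only at heq
        split_ifs at heq with h1 h2 h2 <;>
          (simp only [Sum.inr.injEq, Prod.mk.injEq] at heq;
           obtain ⟨rfl, hij⟩ := heq;
           have hjj : j = j' := by omega;
           subst hjj;
           rfl)
    omega
end

section
/- Let (X,d) be a metric space on a finite point set X, and let S, S' be finite nonempty subsets with max_{p∈X} d(p,S) ≤ 2·max_{p∈X} d(p,S'). Then for all p,q,u,v ∈ X with u realizing max_u d(u,S'), one has min_{s∈S}(d(p,s)+d(s,q)) ≤ 2·min_{s∈S'}(d(u,s)+d(s,v)) + 6·d(u,v) + d(p,q). -/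
open Finset

/-- in a finite metric space, if max_p d(p,S) ≤ 2 max_p d(p,S') and u realizes
max_w d(w,S'), then d(p,S,q) ≤ 2 d(u,S',v) + 6 d(u,v) + d(p,q) for all p, q, v. -/
theorem stmt_13 {X : Type*} [MetricSpace X] [Fintype X] [Nonempty X]
    (S S' : Finset X) (hS : S.Nonempty) (hS' : S'.Nonempty)
    (h2approx :
      univ.sup' univ_nonempty (fun p => S.inf' hS fun s => dist p s) ≤
        2 * univ.sup' univ_nonempty (fun p => S'.inf' hS' fun s => dist p s))
    (u : X)
    (hu : S'.inf' hS' (fun s => dist u s) =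
      univ.sup' univ_nonempty (fun w => S'.inf' hS' fun s => dist w s)) :
    ∀ p q v : X,
      S.inf' hS (fun s => dist p s + dist s q) ≤
        2 * S'.inf' hS' (fun s => dist u s + dist s v) + 6 * dist u v + dist p q := by
  intro p q v
  set r := univ.sup' univ_nonempty (fun w => S'.inf' hS' fun s => dist w s) with hr
  -- choose s ∈ S closest to p
  obtain ⟨s, hsS, hseq⟩ := S.exists_mem_eq_inf' hS (fun s => dist p s)
  have hps : dist p s ≤ 2 * r := by
    have h1 : S.inf' hS (fun s => dist p s) ≤
        univ.sup' univ_nonempty (fun p => S.inf' hS fun s => dist p s) :=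
      Finset.le_sup' (fun p => S.inf' hS fun s => dist p s) (mem_univ p)
    have := le_trans h1 h2approx
    rw [hseq] at this
    exact this
  -- LHS bound
  have hLHS : S.inf' hS (fun s => dist p s + dist s q) ≤ 4 * r + dist p q := by
    have h1 : S.inf' hS (fun s => dist p s + dist s q) ≤ dist p s + dist s q :=
      Finset.inf'_le _ hsS
    have h2 : dist s q ≤ dist s p + dist p q := dist_triangle s p q
    have h3 : dist s p = dist p s := dist_comm s p
    linarith
  -- RHS lower bound
  have hRHS : 2 * r - dist u v ≤ S'.inf' hS' (fun s => dist u s + dist s v) := by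
    apply Finset.le_inf'
    intro s' hs'
    have h1 : r ≤ dist u s' := by
      rw [← hu]; exact Finset.inf'_le _ hs'
    have h3 : dist u s' ≤ dist s' v + dist u v := by
      calc dist u s' ≤ dist u v + dist v s' := dist_triangle u v s'
        _ = dist s' v + dist u v := by rw [dist_comm v s']; ring
    linarith
  have huv : 0 ≤ dist u v := dist_nonneg
  linarith
end
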